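/- If the corners c₁, c₂, c₃, c₄ of a 4-dimensional facet-continuous polycubic chain Q₁, Q₂, Q₃, Q₄ of length 4 do not lie in a common 2-dimensional affine plane (i.e. the chain is not coplanar), then the Euclidean diameter of its body satisfies diam(Q₁ ∪ Q₂ ∪ Q₃ ∪ Q₄) ≥ √13, and hence the dilation of the chain is at least 169/4. -/

import Mathlib

/-!
Each facet step adds `±e_j`, so `c 3 - c 0 = s₀ e_{j₀} + s₁ e_{j₁} + s₂ e_{j₂}` with `sₖ = ±1`.
If two of the directions `jₖ` agreed, all corner differences would lie in the span of two basis
vectors; so non-coplanarity makes them distinct, and `c 3 - c 0` has exactly three coordinates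
`±1`. Opposite corners of the first and the last cube are then at distance
`√(4 + 4 + 4 + 1) = √13`, and the whole chain has `diam⁴ / 4 ≥ 169 / 4`.
-/

open Set

def cubeAt (d : ℕ) (v : Fin d → ℤ) : Set (EuclideanSpace ℝ (Fin d)) :=
  {x | ∀ i, x i ∈ Icc (v i : ℝ) ((v i : ℝ) + 1)}

def IsPolycubicChain (d n : ℕ) (c : ℕ → Fin d → ℤ) : Prop :=
  (∀ i j, i < n → j < n → c i = c j → i = j) ∧
  ∀ i, i + 1 < n →
    (∀ idx, c (i + 1) idx - c i idx ∈ ({-1, 0, 1} : Set ℤ)) ∧ c (i + 1) ≠ c i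

def FacetContinuous (d n : ℕ) (c : ℕ → Fin d → ℤ) : Prop :=
  ∀ i, i + 1 < n → ∃ j : Fin d,
    (c (i + 1) j - c i j = 1 ∨ c (i + 1) j - c i j = -1) ∧
    ∀ idx, idx ≠ j → c (i + 1) idx = c i idx

noncomputable def chainDilation (d n : ℕ) (c : ℕ → Fin d → ℤ) : ℝ :=
  sSup {w : ℝ | ∃ i j : ℕ, i ≤ j ∧ j < n ∧
    w = Metric.diam (⋃ k ∈ Finset.Icc i j, cubeAt d (c k)) ^ d / ((j - i + 1 : ℕ) : ℝ)}

def realCorner (d : ℕ) (v : Fin d → ℤ) : EuclideanSpace ℝ (Fin d) :=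
  WithLp.toLp 2 (fun i => (v i : ℝ))

lemma isBounded_cubeAt (d : ℕ) (v : Fin d → ℤ) : Bornology.IsBounded (cubeAt d v) := by
  have : cubeAt d v = WithLp.ofLp ⁻¹' Icc (fun i => (v i : ℝ)) (fun i => (v i : ℝ) + 1) := by
    ext x; simp [cubeAt, Pi.le_def, forall_and]
  rw [this]
  exact (PiLp.antilipschitzWith_ofLp 2 _).isBounded_preimage (Metric.isBounded_Icc _ _)

lemma exists_mem_cubeAt_dist_eq {d : ℕ} (u v : Fin d → ℤ) :
    ∃ x ∈ cubeAt d u, ∃ y ∈ cubeAt d v,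
      dist x y = √(∑ i, ((|v i - u i| + 1 : ℤ) : ℝ) ^ 2) := by
  refine ⟨WithLp.toLp 2 fun i => if u i ≤ v i then (u i : ℝ) else u i + 1, ?_,
    WithLp.toLp 2 fun i => if u i ≤ v i then (v i : ℝ) + 1 else v i, ?_, ?_⟩
  · intro i; dsimp only; split_ifs <;> simp
  · intro i; dsimp only; split_ifs <;> simp
  · rw [EuclideanSpace.dist_eq]
    congr 1
    refine Finset.sum_congr rfl fun i _ => ?_
    rw [Real.dist_eq, sq_abs, PiLp.toLp_apply, PiLp.toLp_apply]
    split_ifs with h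
    · rw [abs_of_nonneg (sub_nonneg.2 h)]; push_cast; ring
    · rw [abs_of_neg (sub_neg.2 (not_le.1 h))]; push_cast; ring

lemma sqrt_sum_sq_le_diam {d : ℕ} {u v : Fin d → ℤ} {S : Set (EuclideanSpace ℝ (Fin d))}
    (hS : Bornology.IsBounded S) (hu : cubeAt d u ⊆ S) (hv : cubeAt d v ⊆ S) :
    √(∑ i, ((|v i - u i| + 1 : ℤ) : ℝ) ^ 2) ≤ Metric.diam S := by
  obtain ⟨x, hx, y, hy, hxy⟩ := exists_mem_cubeAt_dist_eq u v
  exact hxy ▸ Metric.dist_le_diam_of_mem hS (hu hx) (hv hy)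

lemma le_chainDilation {d n i j : ℕ} (c : ℕ → Fin d → ℤ) (hij : i ≤ j) (hjn : j < n) :
    Metric.diam (⋃ k ∈ Finset.Icc i j, cubeAt d (c k)) ^ d / ((j - i + 1 : ℕ) : ℝ) ≤
      chainDilation d n c := by
  refine le_csSup ?_ ⟨i, j, hij, hjn, rfl⟩
  refine (((Set.finite_Iio n).prod (Set.finite_Iio n)).image fun p : ℕ × ℕ =>
    Metric.diam (⋃ k ∈ Finset.Icc p.1 p.2, cubeAt d (c k)) ^ d /
      ((p.2 - p.1 + 1 : ℕ) : ℝ)).bddAbove.mono ?_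
  rintro w ⟨i, j, hij, hjn, rfl⟩
  exact ⟨(i, j), ⟨hij.trans_lt hjn, hjn⟩, rfl⟩

lemma FacetContinuous.exists_eq_add_single {d n : ℕ} {c : ℕ → Fin d → ℤ}
    (hc : FacetContinuous d n c) {i : ℕ} (hi : i + 1 < n) :
    ∃ j s, |s| = 1 ∧ c (i + 1) = c i + Pi.single j s := by
  obtain ⟨j, hstep, hrest⟩ := hc i hi
  refine ⟨j, c (i + 1) j - c i j, by rcases hstep with h | h <;> simp [h], ?_⟩
  ext idx
  by_cases h : idx = j
  · subst h; simp
  · simp [h, hrest idx h]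

lemma realCorner_add {d : ℕ} (u v : Fin d → ℤ) :
    realCorner d (u + v) = realCorner d u + realCorner d v := by
  ext; simp [realCorner]

lemma realCorner_single {d : ℕ} (j : Fin d) (s : ℤ) :
    realCorner d (Pi.single j s) = (s : ℝ) • EuclideanSpace.single j 1 := by
  ext i; by_cases h : i = j <;> simp [realCorner, Pi.single_apply, h]

lemma pairwise_ne_of_two_lt_finrank_span {R M ι : Type*} [DivisionRing R] [AddCommGroup M]
    [Module R M] (e : ι → M) {j₀ j₁ j₂ : ι} {s : Set M}
    (hs : s ⊆ Submodule.span R {e j₀, e j₁, e j₂})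
    (hrank : 2 < Module.finrank R (Submodule.span R s)) :
    j₀ ≠ j₁ ∧ j₀ ≠ j₂ ∧ j₁ ≠ j₂ := by
  classical
  have hcard : 2 < ({e j₀, e j₁, e j₂} : Finset M).card := by
    refine hrank.trans_le ((Submodule.finrank_mono (Submodule.span_le.2 ?_)).trans
      (finrank_span_finset_le_card _))
    simpa using hs
  refine ⟨?_, ?_, ?_⟩ <;> rintro h <;> simp [h] at hcard <;>
    exact hcard.not_ge Finset.card_le_two

lemma abs_single_add_single_add_single_apply {ι : Type*} [DecidableEq ι] {j₀ j₁ j₂ : ι}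
    (h₀₁ : j₀ ≠ j₁) (h₀₂ : j₀ ≠ j₂) (h₁₂ : j₁ ≠ j₂) {s₀ s₁ s₂ : ℤ}
    (hs₀ : |s₀| = 1) (hs₁ : |s₁| = 1) (hs₂ : |s₂| = 1) (i : ι) :
    |(Pi.single j₀ s₀ + Pi.single j₁ s₁ + Pi.single j₂ s₂ : ι → ℤ) i| =
      if i ∈ ({j₀, j₁, j₂} : Finset ι) then 1 else 0 := by
  by_cases h₀ : i = j₀
  · subst h₀; simp [h₀₁, h₀₂, hs₀]
  by_cases h₁ : i = j₁
  · subst h₁; simp [h₀₁.symm, h₁₂, hs₁]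
  by_cases h₂ : i = j₂
  · subst h₂; simp [h₀₂.symm, h₁₂.symm, hs₂]
  simp [h₀, h₁, h₂]

lemma sum_sq_abs_add_one_of_abs_eq_ite {ι : Type*} [Fintype ι] [DecidableEq ι] {w : ι → ℤ}
    {J : Finset ι} (hw : ∀ i, |w i| = if i ∈ J then 1 else 0) :
    ∑ i, (|w i| + 1) ^ 2 = (Fintype.card ι : ℤ) + 3 * J.card := by
  calc ∑ i, (|w i| + 1) ^ 2 = ∑ i, (1 + if i ∈ J then 3 else 0) :=
        Finset.sum_congr rfl fun i _ => by rw [hw i]; split_ifs <;> norm_num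
    _ = (Fintype.card ι : ℤ) + 3 * J.card := by
        rw [Finset.sum_add_distrib, Finset.sum_ite_mem]; simp [mul_comm]

theorem FacetContinuous.exists_abs_sub_eq_ite {d : ℕ} {c : ℕ → Fin d → ℤ}
    (hfc : FacetContinuous d 4 c)
    (hnoncop : 2 < Module.finrank ℝ (Submodule.span ℝ
      {realCorner d (c 1) - realCorner d (c 0), realCorner d (c 2) - realCorner d (c 0),
        realCorner d (c 3) - realCorner d (c 0)})) :
    ∃ J : Finset (Fin d), J.card = 3 ∧ ∀ i, |c 3 i - c 0 i| = if i ∈ J then 1 else 0 := by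
  obtain ⟨j₀, s₀, hs₀, h₁⟩ : ∃ j s, |s| = 1 ∧ c 1 = c 0 + Pi.single j s :=
    hfc.exists_eq_add_single (by norm_num)
  obtain ⟨j₁, s₁, hs₁, h₂⟩ : ∃ j s, |s| = 1 ∧ c 2 = c 1 + Pi.single j s :=
    hfc.exists_eq_add_single (by norm_num)
  obtain ⟨j₂, s₂, hs₂, h₃⟩ : ∃ j s, |s| = 1 ∧ c 3 = c 2 + Pi.single j s :=
    hfc.exists_eq_add_single (by norm_num)
  set e : Fin d → EuclideanSpace ℝ (Fin d) := fun j => EuclideanSpace.single j 1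
  have he : ∀ (t : ℝ) j, j = j₀ ∨ j = j₁ ∨ j = j₂ →
      t • e j ∈ Submodule.span ℝ {e j₀, e j₁, e j₂} := by
    rintro t j (rfl | rfl | rfl) <;> exact Submodule.smul_mem _ _ (Submodule.subset_span (by simp))
  obtain ⟨h₀₁, h₀₂, h₁₂⟩ : j₀ ≠ j₁ ∧ j₀ ≠ j₂ ∧ j₁ ≠ j₂ := by
    refine pairwise_ne_of_two_lt_finrank_span e ?_ hnoncop
    rw [h₃, h₂, h₁]
    simp only [realCorner_add, add_assoc, add_sub_cancel_left, realCorner_single,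
      Set.insert_subset_iff, Set.singleton_subset_iff, SetLike.mem_coe]
    exact ⟨he _ _ (by simp), add_mem (he _ _ (by simp)) (he _ _ (by simp)),
      add_mem (he _ _ (by simp)) (add_mem (he _ _ (by simp)) (he _ _ (by simp)))⟩
  have hdiff : c 3 - c 0 = Pi.single j₀ s₀ + Pi.single j₁ s₁ + Pi.single j₂ s₂ := by
    rw [h₃, h₂, h₁]; abel
  refine ⟨{j₀, j₁, j₂}, Finset.card_eq_three.2 ⟨_, _, _, h₀₁, h₀₂, h₁₂, rfl⟩, fun i => ?_⟩
  rw [← Pi.sub_apply, hdiff]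
  exact abs_single_add_single_add_single_apply h₀₁ h₀₂ h₁₂ hs₀ hs₁ hs₂ i

theorem FacetContinuous.sqrt_add_nine_le_diam {d : ℕ} {c : ℕ → Fin d → ℤ}
    (hfc : FacetContinuous d 4 c)
    (hnoncop : 2 < Module.finrank ℝ (Submodule.span ℝ
      {realCorner d (c 1) - realCorner d (c 0), realCorner d (c 2) - realCorner d (c 0),
        realCorner d (c 3) - realCorner d (c 0)})) :
    √(d + 9) ≤ Metric.diam (⋃ k ∈ Finset.range 4, cubeAt d (c k)) := by
  obtain ⟨J, hJ, habs⟩ := hfc.exists_abs_sub_eq_ite hnoncop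
  have hsum : ∑ i, ((|c 3 i - c 0 i| + 1 : ℤ) : ℝ) ^ 2 = d + 9 := by
    have := sum_sq_abs_add_one_of_abs_eq_ite habs
    rw [hJ, Fintype.card_fin] at this
    exact_mod_cast this
  have hcube : ∀ k ∈ Finset.range 4, cubeAt d (c k) ⊆ ⋃ k ∈ Finset.range 4, cubeAt d (c k) :=
    fun k hk => Set.subset_biUnion_of_mem (u := fun k => cubeAt d (c k)) hk
  exact hsum ▸ sqrt_sum_sq_le_diam
    ((Bornology.isBounded_biUnion_finset _).2 fun k _ => isBounded_cubeAt d (c k))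
    (hcube 0 (by simp)) (hcube 3 (by simp))

theorem chain4d_four_noncoplanar_diam_ge_general (c : ℕ → Fin 4 → ℤ)
    (hfc : FacetContinuous 4 4 c)
    (hnoncop : ¬ Module.finrank ℝ
      (Submodule.span ℝ
        ({realCorner 4 (c 1) - realCorner 4 (c 0),
          realCorner 4 (c 2) - realCorner 4 (c 0),
          realCorner 4 (c 3) - realCorner 4 (c 0)} :
            Set (EuclideanSpace ℝ (Fin 4)))) ≤ 2) :
    Real.sqrt 13 ≤ Metric.diam (⋃ k ∈ Finset.range 4, cubeAt 4 (c k)) ∧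
      169 / 4 ≤ chainDilation 4 4 c := by
  have hdiam : √13 ≤ Metric.diam (⋃ k ∈ Finset.range 4, cubeAt 4 (c k)) := by
    have := hfc.sqrt_add_nine_le_diam (lt_of_not_ge hnoncop)
    rwa [show ((4 : ℕ) : ℝ) + 9 = 13 by norm_num] at this
  refine ⟨hdiam, le_trans ?_ (le_chainDilation c (i := 0) (j := 3) (by norm_num) (by norm_num))⟩
  have h169 : (169 : ℝ) = √13 ^ 4 := by
    rw [show √13 ^ 4 = (√13 ^ 2) ^ 2 by ring, Real.sq_sqrt (by norm_num)]; norm_num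
  rw [show Finset.Icc 0 3 = Finset.range 4 from rfl, h169]
  gcongr
  norm_num

/-- If the corners of a 4D facet-continuous polycubic chain of length 4 do not
lie in a common 2-dimensional affine plane (i.e. the linear span of the
difference vectors has rank greater than 2), then the diameter of its body is
at least `√13`, and hence its dilation is at least `169/4`. -/
theorem chain4d_four_noncoplanar_diam_ge (c : ℕ → Fin 4 → ℤ)
    (hchain : IsPolycubicChain 4 4 c) (hfc : FacetContinuous 4 4 c)
    (hnoncop : ¬ Module.finrank ℝ
      (Submodule.span ℝ
        ({realCorner 4 (c 1) - realCorner 4 (c 0),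
          realCorner 4 (c 2) - realCorner 4 (c 0),
          realCorner 4 (c 3) - realCorner 4 (c 0)} :
            Set (EuclideanSpace ℝ (Fin 4)))) ≤ 2) :
    Real.sqrt 13 ≤ Metric.diam (⋃ k ∈ Finset.range 4, cubeAt 4 (c k)) ∧
      169 / 4 ≤ chainDilation 4 4 c :=
  chain4d_four_noncoplanar_diam_ge_general c hfc hnoncop
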